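/- arXiv:1412.2490 — 2 statements merged into one kernel-verified Lean document; each statement's English description precedes it below -/
import Mathlib

section
/- Let G be the group of order p^4 (p an odd prime) generated by a, b, c with relations a^{p²} = b^p = c^p = 1, [a,b] = [b,c] = 1, [a,c] = a^p. Then for every 2-cocycle f ∈ Z²(G, ℂ*), the element a^p is f-regular; in particular G is not of central type. -/
/-- A 2-cocycle on `G` with values in `ℂ*`. -/
def IsCocycle {G : Type*} [Group G] (f : G → G → ℂˣ) : Prop :=
  ∀ x y z : G, f x y * f (x * y) z = f y z * f x (y * z)

/-- An element `g` is `f`-regular if `α_f(g,x) = f(g,x)/f(x,g) = 1` for all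
`x` in the centralizer of `g`. -/
def IsFRegular {G : Type*} [Group G] (f : G → G → ℂˣ) (g : G) : Prop :=
  ∀ x ∈ Subgroup.centralizer ({g} : Set G), f g x = f x g

/-- A 2-cocycle is nondegenerate if `1` is the only `f`-regular element. -/
def IsNondegenerate {G : Type*} [Group G] (f : G → G → ℂˣ) : Prop :=
  ∀ g : G, IsFRegular f g → g = 1

/-- A group is of central type if it admits a nondegenerate 2-cocycle. -/
def IsCentralType (G : Type*) [Group G] : Prop :=
  ∃ f : G → G → ℂˣ, IsCocycle f ∧ IsNondegenerate f

/-!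
A cocycle `f` defines a central extension `E` of `G` by `ℂˣ`, and `f (a ^ p) x = f x (a ^ p)`
says that the canonical lifts of `a ^ p` and `x` commute in `E`. Lifts are unique up to central
elements, so it suffices that `u ^ p` commutes with lifts `u, v, w` of the generators `a, c, b`.

Put `q = ⁅u, v⁆`; the relation `⁅a, c⁆ = a ^ p` makes `u ^ p = z * q` with `z` central. Since
`⁅w, u⁆` and `⁅w, v⁆` are central, `w` commutes with `q`. For `v`: `q` commutes with `u`, so
`⁅q, v⁆ = ⁅u ^ p, v⁆ = q ^ p`, i.e. `v` conjugates `q` to `q ^ (1 - p)`, and by induction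
`⁅v ^ k, u⁆ = q ^ (p * C(k, 2) - k)`. Centrality of `u ^ p²` gives `q ^ p² = 1`, centrality of
`v ^ p` gives `q ^ (p * C(p, 2) - p) = 1`, and for odd `p` we have `p ∣ C(p, 2)`, so `q ^ p = 1`
and `q` commutes with `v`.
-/

open Subgroup
open scoped commutatorElement

section Commutator

variable {H : Type*} [Group H]

lemma Commute.of_mul_inv_mem_center {x y w : H} (hxy : x * y⁻¹ ∈ center H)
    (h : Commute y w) : Commute x w := by
  have hz : Commute (x * y⁻¹) w := (mem_center_iff.mp hxy w).symm
  simpa using hz.mul_left h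

lemma commutatorElement_eq_one_of_mem_center {z : H} (hz : z ∈ center H) (x : H) : ⁅z, x⁆ = 1 :=
  commutatorElement_eq_one_iff_commute.mpr (mem_center_iff.mp hz x).symm

lemma commutatorElement_mul_left_of_mem_center {z : H} (hz : z ∈ center H) (u v : H) :
    ⁅z * u, v⁆ = ⁅u, v⁆ := by
  rw [commutatorElement_mul_left_eq_conj_mul, commutatorElement_eq_one_of_mem_center hz,
    (mem_center_iff.mp hz _).symm]
  group

lemma commutatorElement_mul_right_of_mem_center {z : H} (hz : z ∈ center H) (u v : H) :
    ⁅u, z * v⁆ = ⁅u, v⁆ := by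
  rw [← commutatorElement_inv, commutatorElement_mul_left_of_mem_center hz, commutatorElement_inv]

lemma commute_commutatorElement_of_mem_center {w u v : H} (hu : ⁅w, u⁆ ∈ center H)
    (hv : ⁅w, v⁆ ∈ center H) : Commute w ⁅u, v⁆ := by
  have hconj : MulAut.conj w ⁅u, v⁆ = ⁅u, v⁆ := by
    rw [map_commutatorElement, conj_eq_commutatorElement_mul, conj_eq_commutatorElement_mul,
      commutatorElement_mul_left_of_mem_center hu, commutatorElement_mul_right_of_mem_center hv]
  rwa [MulAut.conj_apply, mul_inv_eq_iff_eq_mul] at hconj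

lemma commutatorElement_pow_left {u v : H} (h : Commute u ⁅u, v⁆) (k : ℕ) :
    ⁅u ^ k, v⁆ = ⁅u, v⁆ ^ k := by
  induction k with
  | zero => simp [commutatorElement_def]
  | succ k ih =>
    rw [pow_succ', commutatorElement_mul_left_eq_conj_mul, ih, (h.pow_right k).eq,
      mul_inv_cancel_right, pow_succ]

lemma commutatorElement_pow_left_eq_zpow {p : ℕ} {u v : H} (hq : ⁅u, v⁆ ^ (p ^ 2) = 1)
    (hvq : MulAut.conj v ⁅u, v⁆ = ⁅u, v⁆ ^ (1 - p : ℤ)) (k : ℕ) :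
    ⁅v ^ k, u⁆ = ⁅u, v⁆ ^ (p * k.choose 2 - k : ℤ) := by
  induction k with
  | zero => simp [commutatorElement_def]
  | succ k ih =>
    have hexp : (p * (k + 1).choose 2 - (k + 1 : ℕ) : ℤ)
        = (1 - p) * (p * k.choose 2 - k) - 1 + ↑(p ^ 2) * k.choose 2 := by
      rw [Nat.choose_succ_succ', Nat.choose_one_right]
      push_cast
      ring
    have hconj : v * ⁅v ^ k, u⁆ * v⁻¹ = ⁅u, v⁆ ^ ((1 - p) * (p * k.choose 2 - k : ℤ)) := by
      rw [ih, ← MulAut.conj_apply, map_zpow, hvq, ← zpow_mul]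
    rw [pow_succ', commutatorElement_mul_left_eq_conj_mul, hconj, ← commutatorElement_inv u v,
      hexp, zpow_add, zpow_mul _ (p ^ 2 : ℕ), zpow_natCast _ (p ^ 2), hq, one_zpow, mul_one,
      zpow_sub_one]

section CentralPower

variable {p : ℕ} {u v : H} (hz : u ^ p * ⁅u, v⁆⁻¹ ∈ center H)
include hz

lemma commute_commutatorElement_of_mul_inv_mem_center : Commute u ⁅u, v⁆ := by
  refine (Commute.of_mul_inv_mem_center (y := u ^ p) ?_ ((Commute.refl u).pow_left p)).symm
  simpa using inv_mem hz

lemma commutatorElement_commutatorElement_eq_pow : ⁅⁅u, v⁆, v⁆ = ⁅u, v⁆ ^ p := calc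
  ⁅⁅u, v⁆, v⁆ = ⁅u ^ p * ⁅u, v⁆⁻¹ * ⁅u, v⁆, v⁆ :=
    (commutatorElement_mul_left_of_mem_center hz _ v).symm
  _ = ⁅u, v⁆ ^ p := by
    rw [inv_mul_cancel_right,
      commutatorElement_pow_left (commute_commutatorElement_of_mul_inv_mem_center hz)]

lemma commutatorElement_pow_eq_one (hp : Odd p) (hu : u ^ (p ^ 2) ∈ center H)
    (hv : v ^ p ∈ center H) : ⁅u, v⁆ ^ p = 1 := by
  have huq := commute_commutatorElement_of_mul_inv_mem_center hz
  have hvq : MulAut.conj v ⁅u, v⁆ = ⁅u, v⁆ ^ (1 - p : ℤ) := calc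
    MulAut.conj v ⁅u, v⁆ = ⁅⁅u, v⁆, v⁆⁻¹ * ⁅u, v⁆ := by simp [commutatorElement_def, mul_assoc]
    _ = ⁅u, v⁆ ^ (1 - p : ℤ) := by
      rw [commutatorElement_commutatorElement_eq_pow hz, ← zpow_natCast, ← zpow_neg,
        ← zpow_add_one, neg_add_eq_sub]
  have hq : ⁅u, v⁆ ^ (p ^ 2) = 1 := by
    rw [← commutatorElement_pow_left huq]
    exact commutatorElement_eq_one_of_mem_center hu v
  have hvp := commutatorElement_pow_left_eq_zpow hq hvq p
  rw [commutatorElement_eq_one_of_mem_center hv] at hvp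
  obtain ⟨m, hm⟩ := hp
  have hchoose : p.choose 2 = p * m := by
    rw [Nat.choose_two_right, hm, Nat.add_sub_cancel, Nat.mul_left_comm,
      Nat.mul_div_cancel_left _ two_pos]
  have hexp : (p * p.choose 2 - p : ℤ) = ↑(p ^ 2) * m - p := by
    rw [hchoose]
    push_cast
    ring
  rw [hexp, zpow_sub, zpow_mul, zpow_natCast _ (p ^ 2), hq, one_zpow, one_mul, zpow_natCast] at hvp
  exact inv_eq_one.mp hvp.symm

lemma commute_pow_of_mem_center (hp : Odd p) (hu : u ^ (p ^ 2) ∈ center H)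
    (hv : v ^ p ∈ center H) : Commute (u ^ p) v := by
  refine Commute.of_mul_inv_mem_center hz (commutatorElement_eq_one_iff_commute.mp ?_)
  rw [commutatorElement_commutatorElement_eq_pow hz, commutatorElement_pow_eq_one hz hp hu hv]

lemma commute_pow_of_commute_commutatorElement {w : H} (hw : Commute w ⁅u, v⁆) :
    Commute (u ^ p) w :=
  Commute.of_mul_inv_mem_center hz hw.symm

end CentralPower

end Commutator

namespace IsCocycle

variable {G : Type*} [Group G] {f : G → G → ℂˣ}

lemma apply_one_right (hf : IsCocycle f) (g : G) : f g 1 = f 1 1 := by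
  simpa using hf g 1 1

lemma apply_one_left (hf : IsCocycle f) (g : G) : f 1 g = f 1 1 := by
  simpa using (hf 1 1 g).symm

lemma apply_inv_self (hf : IsCocycle f) (g : G) : f g g⁻¹ = f g⁻¹ g := by
  simpa [hf.apply_one_left, hf.apply_one_right] using hf g g⁻¹ g

/-- The central extension of `G` by `ℂˣ` attached to `f`: the product `ℂˣ × G` with
`(s, g) * (t, h) = (s * t * f g h, g * h)`. It is indexed by the cocycle condition so that the
group structure can be an instance. -/
@[ext]
structure Extension (_hf : IsCocycle f) where
  scalar : ℂˣ
  base : G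

namespace Extension

variable {hf : IsCocycle f}

instance : Mul hf.Extension :=
  ⟨fun x y => ⟨x.scalar * y.scalar * f x.base y.base, x.base * y.base⟩⟩

instance : One hf.Extension := ⟨⟨(f 1 1)⁻¹, 1⟩⟩

instance : Inv hf.Extension :=
  ⟨fun x => ⟨(f 1 1 * x.scalar * f x.base x.base⁻¹)⁻¹, x.base⁻¹⟩⟩

@[simp] lemma scalar_mul (x y : hf.Extension) :
    (x * y).scalar = x.scalar * y.scalar * f x.base y.base := rfl
@[simp] lemma base_mul (x y : hf.Extension) : (x * y).base = x.base * y.base := rfl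
@[simp] lemma scalar_one : (1 : hf.Extension).scalar = (f 1 1)⁻¹ := rfl
@[simp] lemma base_one : (1 : hf.Extension).base = 1 := rfl
@[simp] lemma scalar_inv (x : hf.Extension) :
    x⁻¹.scalar = (f 1 1 * x.scalar * f x.base x.base⁻¹)⁻¹ := rfl
@[simp] lemma base_inv (x : hf.Extension) : x⁻¹.base = x.base⁻¹ := rfl

instance : Group hf.Extension :=
  Group.ofLeftAxioms
    (fun x y z => by
      ext1
      · calc x.scalar * y.scalar * f x.base y.base * z.scalar * f (x.base * y.base) z.base
            = x.scalar * y.scalar * z.scalar * (f x.base y.base * f (x.base * y.base) z.base) := by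
              ac_rfl
          _ = x.scalar * (y.scalar * z.scalar * f y.base z.base) * f x.base (y.base * z.base) := by
              rw [hf]; ac_rfl
      · exact mul_assoc _ _ _)
    (fun x => by
      ext1
      · simp [hf.apply_one_left]
      · exact one_mul _)
    (fun x => by
      ext1
      · simp [hf.apply_inv_self, mul_assoc]
      · exact inv_mul_cancel _)

def proj : hf.Extension →* G where
  toFun := base
  map_one' := rfl
  map_mul' _ _ := rfl

lemma proj_apply (x : hf.Extension) : proj x = x.base := rfl

def lift (g : G) : hf.Extension := ⟨1, g⟩

@[simp] lemma scalar_lift (g : G) : (lift g : hf.Extension).scalar = 1 := rfl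
@[simp] lemma base_lift (g : G) : (lift g : hf.Extension).base = g := rfl
@[simp] lemma proj_lift (g : G) : proj (lift g : hf.Extension) = g := rfl

lemma ker_proj_le_center : (proj : hf.Extension →* G).ker ≤ center hf.Extension := by
  intro x hx
  rw [MonoidHom.mem_ker, proj_apply] at hx
  refine mem_center_iff.mpr fun y => ?_
  ext1
  · simp [hx, hf.apply_one_left, hf.apply_one_right, mul_comm]
  · simp [hx]

lemma mul_inv_mem_center_of_proj_eq {x y : hf.Extension} (h : proj x = proj y) :
    x * y⁻¹ ∈ center hf.Extension :=
  ker_proj_le_center (by rw [MonoidHom.mem_ker, map_mul, map_inv, h, mul_inv_cancel])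

lemma commute_lift_iff_mem_map_centralizer {t : hf.Extension} {g : G} :
    Commute t (lift g) ↔ g ∈ (centralizer {t}).map proj := by
  refine ⟨fun h => ⟨lift g, mem_centralizer_singleton_iff.mpr h.symm, rfl⟩, ?_⟩
  rintro ⟨x, hx, rfl⟩
  have htx : Commute t x := (mem_centralizer_singleton_iff.mp hx).symm
  exact (Commute.of_mul_inv_mem_center (x := lift (proj x)) (y := x)
    (mul_inv_mem_center_of_proj_eq rfl) htx.symm).symm

end Extension

lemma apply_comm_of_commute_lift (hf : IsCocycle f) {g h : G}
    (hgh : Commute (Extension.lift g : hf.Extension) (Extension.lift h)) : f g h = f h g := by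
  simpa using congrArg Extension.scalar hgh.eq

variable {p : ℕ} {a b c : G}

open Extension in
lemma commute_lift_pow_of_commutatorElement_eq_pow (hf : IsCocycle f) (hp : Odd p)
    (hgen : closure ({a, b, c} : Set G) = ⊤) (ha : a ^ (p ^ 2) = 1) (hc : c ^ p = 1)
    (hab : Commute a b) (hbc : Commute b c) (hac : ⁅a, c⁆ = a ^ p) (g : G) :
    Commute ((lift a : hf.Extension) ^ p) (lift g) := by
  set u : hf.Extension := lift a
  set v : hf.Extension := lift c
  set w : hf.Extension := lift b
  have hcenter : ∀ x : hf.Extension, proj x = 1 → x ∈ center hf.Extension :=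
    fun x hx => ker_proj_le_center hx
  have hz : u ^ p * ⁅u, v⁆⁻¹ ∈ center hf.Extension :=
    hcenter _ (by
      rw [map_mul, map_inv, map_pow, map_commutatorElement, proj_lift, proj_lift, hac,
        mul_inv_cancel])
  have huv : Commute (u ^ p) v :=
    commute_pow_of_mem_center hz hp (hcenter _ (by simp [u, ha])) (hcenter _ (by simp [v, hc]))
  have huw : Commute (u ^ p) w := by
    refine commute_pow_of_commute_commutatorElement hz
      (commute_commutatorElement_of_mem_center (hcenter _ ?_) (hcenter _ ?_))
    · simp [u, w, map_commutatorElement, commutatorElement_eq_one_iff_commute.mpr hab.symm]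
    · simp [v, w, map_commutatorElement, commutatorElement_eq_one_iff_commute.mpr hbc]
  have hgen_le : closure ({a, b, c} : Set G) ≤ (centralizer {u ^ p}).map proj := by
    rw [closure_le]
    rintro _ (rfl | rfl | rfl)
    · exact commute_lift_iff_mem_map_centralizer.mp ((Commute.refl u).pow_left p)
    · exact commute_lift_iff_mem_map_centralizer.mp huw
    · exact commute_lift_iff_mem_map_centralizer.mp huv
  exact commute_lift_iff_mem_map_centralizer.mpr (hgen_le (hgen ▸ mem_top g))

lemma apply_pow_comm_of_commutatorElement_eq_pow (hf : IsCocycle f) (hp : Odd p)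
    (hgen : closure ({a, b, c} : Set G) = ⊤) (ha : a ^ (p ^ 2) = 1) (hc : c ^ p = 1)
    (hab : Commute a b) (hbc : Commute b c) (hac : ⁅a, c⁆ = a ^ p) (g : G) :
    f (a ^ p) g = f g (a ^ p) := by
  refine hf.apply_comm_of_commute_lift (Commute.of_mul_inv_mem_center ?_
    (hf.commute_lift_pow_of_commutatorElement_eq_pow hp hgen ha hc hab hbc hac g))
  exact Extension.mul_inv_mem_center_of_proj_eq (by simp)

end IsCocycle

theorem apow_fRegular_of_group_ix_general {p : ℕ} (hp : p.Prime) (hodd : Odd p)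
    {G : Type*} [Group G] (a b c : G)
    (hgen : Subgroup.closure ({a, b, c} : Set G) = ⊤)
    (ha : orderOf a = p ^ 2) (hc : orderOf c = p)
    (hab : Commute a b) (hbc : Commute b c)
    (hac : a * c * a⁻¹ * c⁻¹ = a ^ p) :
    (∀ f : G → G → ℂˣ, IsCocycle f → IsFRegular f (a ^ p)) ∧ ¬ IsCentralType G := by
  have hreg : ∀ f : G → G → ℂˣ, IsCocycle f → IsFRegular f (a ^ p) := fun f hf x _ =>
    hf.apply_pow_comm_of_commutatorElement_eq_pow hodd hgen (ha ▸ pow_orderOf_eq_one a)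
      (hc ▸ pow_orderOf_eq_one c) hab hbc hac x
  refine ⟨hreg, fun ⟨f, hf, hnd⟩ => ?_⟩
  have hdvd : p ^ 2 ∣ p ^ 1 := by
    rw [pow_one, ← ha]
    exact orderOf_dvd_of_pow_eq_one (hnd _ (hreg f hf))
  exact absurd ((Nat.pow_dvd_pow_iff_le_right hp.one_lt).mp hdvd) (by norm_num)

/-- Let `G` be the group of order `p^4` (`p` an odd prime) generated by `a, b, c` with
relations `a^{p²} = b^p = c^p = 1`, `[a,b] = [b,c] = 1`, `[a,c] = a^p`.  Then for every
2-cocycle `f ∈ Z²(G, ℂ*)` the element `a^p` is `f`-regular; in particular `G` is not of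
central type. -/
theorem apow_fRegular_of_group_ix {p : ℕ} (hp : p.Prime) (hodd : Odd p)
    {G : Type*} [Group G] (a b c : G)
    (hcard : Nat.card G = p ^ 4)
    (hgen : Subgroup.closure ({a, b, c} : Set G) = ⊤)
    (ha : orderOf a = p ^ 2) (hb : orderOf b = p) (hc : orderOf c = p)
    (hab : Commute a b) (hbc : Commute b c)
    (hac : a * c * a⁻¹ * c⁻¹ = a ^ p) :
    (∀ f : G → G → ℂˣ, IsCocycle f → IsFRegular f (a ^ p)) ∧ ¬ IsCentralType G :=
  apow_fRegular_of_group_ix_general hp hodd a b c hgen ha hc hab hbc hac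
end

section
/- Let G = ⟨a, b, c⟩ be the group of order 16 with a⁴ = c² = 1, a² = b², [a,c] = [b,c] = 1, [a,b] = a². Then for every 2-cocycle f ∈ Z²(G, ℂ*), the element a² is f-regular; in particular G is not of central type. -/
section CocycleRatio

variable {G : Type*}

def cocycleRatio (f : G → G → ℂˣ) (g x : G) : ℂˣ :=
  f g x / f x g

theorem cocycleRatio_swap (f : G → G → ℂˣ) (g x : G) :
    cocycleRatio f x g = (cocycleRatio f g x)⁻¹ :=
  (inv_div _ _).symm

theorem cocycleRatio_eq_one_iff {f : G → G → ℂˣ} {g x : G} :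
    cocycleRatio f g x = 1 ↔ f g x = f x g :=
  div_eq_one

variable [Group G]

namespace IsCocycle

variable {f : G → G → ℂˣ} (hf : IsCocycle f)
include hf

theorem apply_one_right_s10 (x : G) : f x 1 = f 1 1 :=
  mul_right_cancel (by simpa only [mul_one] using hf x 1 1)

theorem apply_one_left_s10 (x : G) : f 1 x = f 1 1 :=
  (mul_right_cancel (by simpa only [one_mul] using hf 1 1 x)).symm

theorem cocycleRatio_one_right (g : G) : cocycleRatio f g 1 = 1 :=
  cocycleRatio_eq_one_iff.mpr (by rw [hf.apply_one_left_s10, hf.apply_one_right_s10])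

theorem cocycleRatio_mul_right {g x y : G} (hx : Commute g x) (hy : Commute g y) :
    cocycleRatio f g (x * y) = cocycleRatio f g x * cocycleRatio f g y := by
  have e₁ := hf g x y
  have e₂ := hf x g y
  have e₃ := hf x y g
  rw [hx.eq] at e₁
  rw [hy.eq] at e₂
  simp only [cocycleRatio, div_mul_div_comm, div_eq_div_iff_mul_eq_mul]
  apply mul_right_cancel (b := f x y)
  ext
  replace e₁ := congrArg Units.val e₁
  replace e₂ := congrArg Units.val e₂
  replace e₃ := congrArg Units.val e₃
  push_cast at e₁ e₂ e₃ ⊢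
  linear_combination (-(f x g : ℂ) * f y g) * e₁ + ((f y g : ℂ) * f g x) * e₂
    + (-(f g x : ℂ) * f g y) * e₃

theorem cocycleRatio_pow_right {g x : G} (hx : Commute g x) (n : ℕ) :
    cocycleRatio f g (x ^ n) = cocycleRatio f g x ^ n := by
  induction n with
  | zero => simpa using hf.cocycleRatio_one_right g
  | succ n ih =>
    rw [pow_succ, hf.cocycleRatio_mul_right (hx.pow_right n) hx, ih, pow_succ]

theorem cocycleRatio_pow_left {g x : G} (hx : Commute g x) (n : ℕ) :
    cocycleRatio f (g ^ n) x = cocycleRatio f g x ^ n := by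
  rw [cocycleRatio_swap, hf.cocycleRatio_pow_right hx.symm, cocycleRatio_swap f x g, inv_pow]

theorem cocycleRatio_pow_self_left (g : G) (n : ℕ) : cocycleRatio f (g ^ n) g = 1 := by
  rw [hf.cocycleRatio_pow_left (Commute.refl g), cocycleRatio, div_self', one_pow]

theorem cocycleRatio_sq_left_of_sq_eq_one {x y : G} (hxy : Commute x y) (hy : y ^ 2 = 1) :
    cocycleRatio f (x ^ 2) y = 1 := by
  rw [hf.cocycleRatio_pow_left hxy, ← hf.cocycleRatio_pow_right hxy, hy,
    hf.cocycleRatio_one_right]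

def cocycleRatioHom {z : G} (hz : z ∈ Subgroup.center G) : G →* ℂˣ where
  toFun := cocycleRatio f z
  map_one' := hf.cocycleRatio_one_right z
  map_mul' _ _ := hf.cocycleRatio_mul_right (Subgroup.mem_center_iff.mp hz _).symm
    (Subgroup.mem_center_iff.mp hz _).symm

theorem isFRegular_of_closure_eq_top {s : Set G} (hs : Subgroup.closure s = ⊤) {z : G}
    (hz : z ∈ Subgroup.center G) (hzs : ∀ x ∈ s, cocycleRatio f z x = 1) :
    IsFRegular f z := by
  have htriv : hf.cocycleRatioHom hz = 1 := MonoidHom.eq_of_eqOn_dense hs hzs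
  exact fun x _ ↦ cocycleRatio_eq_one_iff.mp (DFunLike.congr_fun htriv x)

end IsCocycle

end CocycleRatio

theorem asq_fRegular_of_group16_xi_general {G : Type*} [Group G] (a b c : G)
    (hgen : Subgroup.closure ({a, b, c} : Set G) = ⊤)
    (ha : orderOf a = 4) (hc : orderOf c = 2) (hab2 : a ^ 2 = b ^ 2)
    (hac : Commute a c) :
    (∀ f : G → G → ℂˣ, IsCocycle f → IsFRegular f (a ^ 2)) ∧ ¬ IsCentralType G := by
  have hc2 : c ^ 2 = 1 := hc ▸ pow_orderOf_eq_one c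
  have hcenter : a ^ 2 ∈ Subgroup.center G := by
    rw [Subgroup.center_eq_iInf hgen]
    simp only [Set.mem_insert_iff, Set.mem_singleton_iff, Subgroup.mem_iInf, forall_eq_or_imp,
      forall_eq, Subgroup.mem_centralizer_singleton_iff]
    exact ⟨((Commute.refl a).pow_left 2).eq, (hab2 ▸ (Commute.refl b).pow_left 2).eq,
      (hac.pow_left 2).eq⟩
  have hregular (f : G → G → ℂˣ) (hf : IsCocycle f) : IsFRegular f (a ^ 2) := by
    refine hf.isFRegular_of_closure_eq_top hgen hcenter ?_
    rintro x (rfl | rfl | rfl)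
    · exact hf.cocycleRatio_pow_self_left x 2
    · rw [hab2]
      exact hf.cocycleRatio_pow_self_left x 2
    · exact hf.cocycleRatio_sq_left_of_sq_eq_one hac hc2
  refine ⟨hregular, fun ⟨f, hf, hnondeg⟩ ↦ ?_⟩
  have hdvd : orderOf a ∣ 2 := orderOf_dvd_of_pow_eq_one (hnondeg _ (hregular f hf))
  rw [ha] at hdvd
  norm_num at hdvd

/-- Let `G = ⟨a, b, c⟩` be the group of order 16 with `a⁴ = c² = 1`, `a² = b²`,
`[a,c] = [b,c] = 1`, `[a,b] = a²`.  Then for every 2-cocycle `f ∈ Z²(G, ℂ*)` the element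
`a²` is `f`-regular; in particular `G` is not of central type. -/
theorem asq_fRegular_of_group16_xi {G : Type*} [Group G] (a b c : G)
    (hcard : Nat.card G = 16)
    (hgen : Subgroup.closure ({a, b, c} : Set G) = ⊤)
    (ha : orderOf a = 4) (hc : orderOf c = 2) (hab2 : a ^ 2 = b ^ 2)
    (hac : Commute a c) (hbc : Commute b c)
    (hab : a * b * a⁻¹ * b⁻¹ = a ^ 2) :
    (∀ f : G → G → ℂˣ, IsCocycle f → IsFRegular f (a ^ 2)) ∧ ¬ IsCentralType G :=
  asq_fRegular_of_group16_xi_general a b c hgen ha hc hab2 hac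
end
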